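/- arXiv:1209.2882 — 5 statements merged into one kernel-verified Lean document; each statement's English description precedes it below -/
import Mathlib

section
/- Let P be the symmetric pyramid associated to positive integers p_1 ≤ … ≤ p_r and p_0, and let p be the partition obtained by sorting the multiset (p_1, p_1, …, p_r, p_r, p_0). If A, B ∈ sTab^≤(P) and part(RS(A)) = p, then RS(A) = RS(B) if and only if A = B. -/
namespace BG

variable {α : Type*}

/-- One step of Robinson–Schensted row insertion: insert `x` into a weakly
increasing row, bumping the leftmost entry strictly greater than `x`. -/
def rowInsert [LinearOrder α] : List α → α → List α × Option α
  | [], x => ([x], none)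
  | y :: ys, x =>
    if x < y then (x :: ys, some y)
    else
      let p := rowInsert ys x
      (y :: p.1, p.2)

/-- Insert a letter into a tableau (list of rows, top row first) by
Robinson–Schensted row insertion. -/
def insertT [LinearOrder α] : List (List α) → α → List (List α)
  | [], x => [[x]]
  | r :: rs, x =>
    match rowInsert r x with
    | (r', none) => r' :: rs
    | (r', some y) => r' :: insertT rs y

/-- The insertion tableau of the Robinson–Schensted algorithm. -/
def RS [LinearOrder α] (w : List α) : List (List α) := w.foldl insertT []

/-- The partition underlying a tableau: the list of its row lengths
(top row first, so weakly decreasing). -/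
def part (T : List (List α)) : List ℕ := T.map List.length

/-- The reversed negation of a row. -/
def negRow [Neg α] (l : List α) : List α := l.reverse.map (fun x => -x)

/-- Every column of a left-justified array (list of rows, top to bottom) is
strictly decreasing from top to bottom, where entries must decrease strictly
across any gap occurring in the middle of a column. -/
def ColumnStrict [LT α] (B : List (List α)) : Prop :=
  ∀ j : ℕ, List.Chain' (fun x y => y < x) (B.filterMap (fun r => r[j]?))

/-- A left-justified array is row equivalent to column strict if its entries can
be permuted within rows so that every column is strictly decreasing. -/
def RowEquivColumnStrict [LT α] (A : List (List α)) : Prop :=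
  ∃ B, List.Forall₂ List.Perm A B ∧ ColumnStrict B

/-- Elementary Knuth moves on words of integers. -/
inductive KnuthStep : List ℤ → List ℤ → Prop
  | move1 (u v : List ℤ) (x y z : ℤ) (hxy : x ≤ y) (hyz : y < z) :
      KnuthStep (u ++ x :: z :: y :: v) (u ++ z :: x :: y :: v)
  | move2 (u v : List ℤ) (x y z : ℤ) (hxy : x < y) (hyz : y ≤ z) :
      KnuthStep (u ++ y :: x :: z :: v) (u ++ y :: z :: x :: v)

/-- Knuth equivalence of words of integers. -/
def KnuthEquiv : List ℤ → List ℤ → Prop := Relation.EqvGen KnuthStep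

/-- Generators of the τ-equivalence: Knuth moves (R1), negating the last letter
when its absolute value exceeds that of the previous letter (R2), and
transposing the last two letters when they have opposite signs (R3). -/
inductive TauStep : List ℤ → List ℤ → Prop
  | knuth (u v : List ℤ) : KnuthStep u v → TauStep u v
  | negLast (u : List ℤ) (b a : ℤ) (h : |b| < |a|) :
      TauStep (u ++ [b, a]) (u ++ [b, -a])
  | swapLast (u : List ℤ) (b a : ℤ) (h : b * a < 0) :
      TauStep (u ++ [b, a]) (u ++ [a, b])

/-- The τ-equivalence on words of integers. -/
def TauEquiv : List ℤ → List ℤ → Prop := Relation.EqvGen TauStep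

/-- A larger-smaller transposition. -/
inductive LSStep : List ℤ → List ℤ → Prop
  | swap (u w : List ℤ) (a b : ℤ) (h : b < a) :
      LSStep (u ++ a :: b :: w) (u ++ b :: a :: w)

/-- Dominance order on partitions (weakly decreasing lists of naturals). -/
def DomLE (μ ν : List ℕ) : Prop :=
  μ.sum = ν.sum ∧ ∀ k : ℕ, (μ.take k).sum ≤ (ν.take k).sum

/-- The content of a partition, given as a weakly decreasing list of naturals:
reverse to increasing order `(q₁ ≤ … ≤ q_m)`, prepend a zero part if necessary
so that the number of parts is odd, and take the multiset of
`⌊(qᵢ + i - 1)/2⌋` (1-indexed). -/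
def contentP (q : List ℕ) : Multiset ℕ :=
  let q₁ := q.reverse
  let q₂ := if q₁.length % 2 = 1 then q₁ else 0 :: q₁
  ↑((List.range q₂.length).map (fun i => (q₂.getD i 0 + i) / 2))

/-- Membership in `sTab^≤(P)` where `rows` is the list of row lengths of the
symmetric pyramid `P` (top to bottom): correct shape, skew-symmetry with
respect to the centre of the pyramid, weakly increasing rows, and all entries
in `ℤ` or all entries in `½ + ℤ`. -/
def MemSTabLe (rows : List ℕ) (A : List (List ℚ)) : Prop :=
  A.map List.length = rows ∧
  A.reverse.map negRow = A ∧
  (∀ row ∈ A, List.Chain' (· ≤ ·) row) ∧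
  ((∀ x ∈ A.flatten, ∃ z : ℤ, x = (z : ℚ)) ∨
   (∀ x ∈ A.flatten, ∃ z : ℤ, x = (z : ℚ) + 1 / 2))


/-! Inserting a weakly increasing word into a tableau creates boxes in weakly decreasing rows
(the row bumping lemma). Hence, for an array `Q` with weakly increasing rows, the shape of `RS(Q)`
dominates the decreasingly sorted row lengths of `Q`, and appending a row preserves strict
dominance; so if the two agree for `Q`, they agree for every initial segment of `Q`. Writing
`Q = Q' ++ [u]`, the shapes of `RS(Q')` and `RS(Q)` are then both determined by the row lengths,
and the last box created by `u` lies in the first row in which they differ. Reverse insertion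
from that box recovers the last letter of `u`; repeating this recovers `u` and `RS(Q')` from
`RS(Q)`, and induction on the number of rows recovers `Q`. -/

section RowInsertion

variable [LinearOrder α]

theorem rowInsert_eq_none {r r' : List α} {x : α} (h : rowInsert r x = (r', none)) :
    r' = r ++ [x] ∧ ∀ u ∈ r, u ≤ x := by
  induction r generalizing r' with
  | nil =>
    simp only [rowInsert, Prod.mk.injEq] at h
    exact ⟨h.1.symm, by simp⟩
  | cons y ys ih =>
    by_cases hxy : x < y
    · simp [rowInsert, hxy] at h
    · rcases hp : rowInsert ys x with ⟨t, o⟩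
      simp only [rowInsert, if_neg hxy, hp, Prod.mk.injEq] at h
      obtain ⟨rfl, rfl⟩ := h
      obtain ⟨rfl, hall⟩ := ih hp
      exact ⟨rfl, by simpa [le_of_not_gt hxy] using hall⟩

theorem rowInsert_of_forall_le {r : List α} {x : α} (h : ∀ u ∈ r, u ≤ x) :
    rowInsert r x = (r ++ [x], none) := by
  induction r with
  | nil => rfl
  | cons y ys ih =>
    have hy : ¬ x < y := not_lt.2 (h y (by simp))
    simp [rowInsert, hy, ih fun u hu => h u (by simp [hu])]

theorem rowInsert_eq_some {r r' : List α} {x b : α} (h : rowInsert r x = (r', some b)) :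
    ∃ p, r[p]? = some b ∧ r' = r.set p x ∧ x < b ∧ ∀ i < p, ∀ a, r[i]? = some a → a ≤ x := by
  induction r generalizing r' with
  | nil => simp [rowInsert] at h
  | cons y ys ih =>
    by_cases hxy : x < y
    · simp only [rowInsert, if_pos hxy, Prod.mk.injEq, Option.some.injEq] at h
      obtain ⟨rfl, rfl⟩ := h
      exact ⟨0, by simp, by simp, hxy, by simp⟩
    · rcases hp : rowInsert ys x with ⟨t, _ | c⟩
      · simp [rowInsert, if_neg hxy, hp] at h
      · simp only [rowInsert, if_neg hxy, hp, Prod.mk.injEq, Option.some.injEq] at h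
        obtain ⟨rfl, rfl⟩ := h
        obtain ⟨p, hpb, rfl, hxb, hle⟩ := ih hp
        refine ⟨p + 1, by simpa using hpb, by simp, hxb, ?_⟩
        rintro (_ | i) hi a ha
        · simp only [List.getElem?_cons_zero, Option.some.injEq] at ha
          exact ha ▸ le_of_not_gt hxy
        · exact hle i (by omega) a (by simpa using ha)

theorem rowInsert_fst_ne_nil (r : List α) (x : α) : (rowInsert r x).1 ≠ [] := by
  cases r with
  | nil => simp [rowInsert]
  | cons y ys => by_cases hxy : x < y <;> simp [rowInsert, hxy]

theorem mem_of_mem_rowInsert_fst {r : List α} {x z : α} (hz : z ∈ (rowInsert r x).1) :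
    z = x ∨ z ∈ r := by
  induction r with
  | nil => simpa [rowInsert] using hz
  | cons y ys ih =>
    by_cases hxy : x < y
    · simp only [rowInsert, if_pos hxy, List.mem_cons] at hz ⊢
      tauto
    · simp only [rowInsert, if_neg hxy, List.mem_cons] at hz ⊢
      rcases hz with rfl | hz
      · simp
      · rcases ih hz with h | h <;> simp [h]

theorem pairwise_rowInsert {r : List α} (hr : r.Pairwise (· ≤ ·)) (x : α) :
    (rowInsert r x).1.Pairwise (· ≤ ·) := by
  induction r with
  | nil => simp [rowInsert]
  | cons y ys ih =>
    rw [List.pairwise_cons] at hr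
    by_cases hxy : x < y
    · simp only [rowInsert, if_pos hxy, List.pairwise_cons]
      exact ⟨fun z hz => hxy.le.trans (hr.1 z hz), hr.2⟩
    · simp only [rowInsert, if_neg hxy, List.pairwise_cons]
      refine ⟨fun z hz => ?_, ih hr.2⟩
      rcases mem_of_mem_rowInsert_fst hz with rfl | hz
      · exact le_of_not_gt hxy
      · exact hr.1 z hz

def rowUninsert : List α → α → List α × α
  | [], z => ([], z)
  | w :: ws, z =>
    if ∃ u ∈ ws, u < z then
      let p := rowUninsert ws z; (w :: p.1, p.2)
    else (z :: ws, w)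

theorem rowUninsert_rowInsert {r r' : List α} {x b : α} (hr : r.Pairwise (· ≤ ·))
    (h : rowInsert r x = (r', some b)) : rowUninsert r' b = (r, x) := by
  induction r generalizing r' with
  | nil => simp [rowInsert] at h
  | cons y ys ih =>
    rw [List.pairwise_cons] at hr
    by_cases hxy : x < y
    · simp only [rowInsert, if_pos hxy, Prod.mk.injEq, Option.some.injEq] at h
      obtain ⟨rfl, rfl⟩ := h
      have hno : ¬ ∃ u ∈ ys, u < y := fun ⟨u, hu, hlt⟩ => (hr.1 u hu).not_gt hlt
      simp [rowUninsert, hno]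
    · rcases hp : rowInsert ys x with ⟨t, _ | c⟩
      · simp [rowInsert, if_neg hxy, hp] at h
      · simp only [rowInsert, if_neg hxy, hp, Prod.mk.injEq, Option.some.injEq] at h
        obtain ⟨rfl, rfl⟩ := h
        obtain ⟨p, hpc, rfl, hxc, -⟩ := rowInsert_eq_some hp
        have hyes : ∃ u ∈ ys.set p x, u < c :=
          ⟨x, List.mem_set (List.getElem?_eq_some_iff.1 hpc).1 x, hxc⟩
        simp only [rowUninsert, if_pos hyes, ih hr.2 hp]

theorem le_of_rowInsert_rowInsert {r rx ry : List α} {x y b c : α} (hr : r.Pairwise (· ≤ ·))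
    (hxy : x ≤ y) (hx : rowInsert r x = (rx, some b)) (hy : rowInsert rx y = (ry, some c)) :
    b ≤ c := by
  induction r generalizing x y rx ry with
  | nil => simp [rowInsert] at hx
  | cons y0 ys ih =>
    rw [List.pairwise_cons] at hr
    by_cases hx0 : x < y0
    · simp only [rowInsert, if_pos hx0, Prod.mk.injEq, Option.some.injEq] at hx
      obtain ⟨rfl, rfl⟩ := hx
      rcases hq : rowInsert ys y with ⟨t, _ | c'⟩
      · simp [rowInsert, not_lt.2 hxy, hq] at hy
      · simp only [rowInsert, if_neg (not_lt.2 hxy), hq, Prod.mk.injEq, Option.some.injEq] at hy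
        obtain ⟨-, rfl⟩ := hy
        obtain ⟨q, hqc, -⟩ := rowInsert_eq_some hq
        exact hr.1 _ (List.mem_of_getElem? hqc)
    · rcases hp : rowInsert ys x with ⟨t, _ | b'⟩
      · simp [rowInsert, hx0, hp] at hx
      · simp only [rowInsert, if_neg hx0, hp, Prod.mk.injEq, Option.some.injEq] at hx
        obtain ⟨rfl, rfl⟩ := hx
        have hy0 : ¬ y < y0 := not_lt.2 ((le_of_not_gt hx0).trans hxy)
        rcases hq : rowInsert t y with ⟨t2, _ | c'⟩
        · simp [rowInsert, hy0, hq] at hy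
        · simp only [rowInsert, if_neg hy0, hq, Prod.mk.injEq, Option.some.injEq] at hy
          obtain ⟨-, rfl⟩ := hy
          exact ih hr.2 hxy hp hq

end RowInsertion

section Tableaux

variable [LinearOrder α]

/-- Row insertion, also returning the index of the row that receives the new box. -/
def insertTWithRow : List (List α) → α → List (List α) × ℕ
  | [], x => ([[x]], 0)
  | r :: rs, x =>
    match rowInsert r x with
    | (r', none) => (r' :: rs, 0)
    | (r', some y) => let p := insertTWithRow rs y; (r' :: p.1, p.2 + 1)

theorem insertTWithRow_fst (T : List (List α)) (x : α) :
    (insertTWithRow T x).1 = insertT T x := by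
  induction T generalizing x with
  | nil => rfl
  | cons r rs ih =>
    rcases hp : rowInsert r x with ⟨r', _ | y⟩
    · simp [insertTWithRow, insertT, hp]
    · simp [insertTWithRow, insertT, hp, ih]

theorem insertTWithRow_cons_of_eq_some {r r' : List α} {rs : List (List α)} {x y : α}
    (h : rowInsert r x = (r', some y)) :
    insertTWithRow (r :: rs) x = (r' :: (insertTWithRow rs y).1, (insertTWithRow rs y).2 + 1) := by
  simp [insertTWithRow, h]

def addBox (s : List ℕ) (j : ℕ) : List ℕ :=
  if j < s.length then s.set j (s.getD j 0 + 1) else s ++ [1]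

theorem addBox_cons {s : List ℕ} {j : ℕ} (h : j ≤ s.length) (a : ℕ) :
    addBox (a :: s) (j + 1) = a :: addBox s j := by
  rcases h.lt_or_eq with h | rfl
  · simp [addBox, h]
  · simp [addBox]

theorem part_insertTWithRow (T : List (List α)) (x : α) :
    part (insertTWithRow T x).1 = addBox (part T) (insertTWithRow T x).2 ∧
      (insertTWithRow T x).2 ≤ T.length := by
  induction T generalizing x with
  | nil => simp [insertTWithRow, part, addBox]
  | cons r rs ih =>
    rcases hp : rowInsert r x with ⟨r', _ | y⟩
    · obtain ⟨rfl, -⟩ := rowInsert_eq_none hp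
      simp [insertTWithRow, hp, part, addBox]
    · obtain ⟨ih1, ih2⟩ := ih y
      obtain ⟨p, -, rfl, -⟩ := rowInsert_eq_some hp
      rw [insertTWithRow_cons_of_eq_some hp]
      refine ⟨?_, by simpa using ih2⟩
      change (r.set p x).length :: part (insertTWithRow rs y).1 = addBox (r.length :: part rs) _
      rw [addBox_cons (by simpa [part] using ih2), ih1, List.length_set]

/-- Row `s` may stand directly below row `r` in a tableau. -/
def ColumnLT (r s : List α) : Prop :=
  s.length ≤ r.length ∧ ∀ (i : ℕ) (a b : α), r[i]? = some a → s[i]? = some b → a < b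

def IsTableau (T : List (List α)) : Prop :=
  (∀ r ∈ T, r ≠ [] ∧ r.Pairwise (· ≤ ·)) ∧ T.IsChain ColumnLT

theorem ColumnLT.headD {r : List α} {rs : List (List α)} (h : ∀ s ∈ rs.head?, ColumnLT r s) :
    ColumnLT r (rs.headD []) := by
  cases rs with
  | nil => exact ⟨by simp, by simp⟩
  | cons s rs => exact h s rfl

theorem ColumnLT.rowInsert_of_eq_none {r s r' : List α} {x : α} (hrs : ColumnLT r s)
    (h : rowInsert r x = (r', none)) : ColumnLT r' s := by
  obtain ⟨rfl, -⟩ := rowInsert_eq_none h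
  have hlen := hrs.1
  refine ⟨by simp only [List.length_append, List.length_singleton]; omega,
    fun i a b ha hb => hrs.2 i a b ?_ hb⟩
  have hi : i < s.length := (List.getElem?_eq_some_iff.1 hb).1
  rwa [List.getElem?_append_left (by omega)] at ha

theorem lt_of_getElem?_set_of_le {r : List α} {p : ℕ} {x b : α} (hp : p < r.length)
    (hxb : x < b) (hle : ∀ i < p, ∀ a, r[i]? = some a → a ≤ x) {i : ℕ} (hi : i ≤ p) {a : α}
    (ha : (r.set p x)[i]? = some a) : a < b := by
  rcases hi.lt_or_eq with hi | rfl
  · rw [List.getElem?_set_ne (by omega)] at ha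
    exact (hle i hi a ha).trans_lt hxb
  · rw [List.getElem?_set_self hp, Option.some.injEq] at ha
    exact ha ▸ hxb

theorem ColumnLT.rowInsert_of_eq_some_of_eq_none {r s r' s' : List α} {x b : α}
    (hrs : ColumnLT r s) (h : rowInsert r x = (r', some b)) (hs : rowInsert s b = (s', none)) :
    ColumnLT r' s' := by
  obtain ⟨p, hpb, rfl, hxb, hle⟩ := rowInsert_eq_some h
  have hp : p < r.length := (List.getElem?_eq_some_iff.1 hpb).1
  obtain ⟨rfl, hsb⟩ := rowInsert_eq_none hs
  have hsp : s.length ≤ p := by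
    by_contra! hps
    exact (hrs.2 p b _ hpb (List.getElem?_eq_getElem hps)).not_ge (hsb _ (List.getElem_mem hps))
  refine ⟨by simp only [List.length_append, List.length_singleton, List.length_set]; omega,
    fun i a c ha hc => ?_⟩
  by_cases hi : i < s.length
  · rw [List.getElem?_append_left hi] at hc
    rw [List.getElem?_set_ne (by omega)] at ha
    exact hrs.2 i a c ha hc
  · have hi' : i = s.length := by
      have := (List.getElem?_eq_some_iff.1 hc).1
      simp only [List.length_append, List.length_singleton] at this
      omega
    subst hi'
    rw [List.getElem?_concat_length, Option.some.injEq] at hc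
    exact hc ▸ lt_of_getElem?_set_of_le hp hxb hle hsp ha

theorem ColumnLT.rowInsert_of_eq_some_of_eq_some {r s r' s' : List α} {x b c : α}
    (hrs : ColumnLT r s) (h : rowInsert r x = (r', some b)) (hs : rowInsert s b = (s', some c)) :
    ColumnLT r' s' := by
  obtain ⟨p, hpb, rfl, hxb, hle⟩ := rowInsert_eq_some h
  have hp : p < r.length := (List.getElem?_eq_some_iff.1 hpb).1
  obtain ⟨q, hqc, rfl, -, hqle⟩ := rowInsert_eq_some hs
  have hq : q < s.length := (List.getElem?_eq_some_iff.1 hqc).1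
  have hqp : q ≤ p := by
    by_contra! hpq
    have hps : p < s.length := hpq.trans hq
    exact (hrs.2 p b _ hpb (List.getElem?_eq_getElem hps)).not_ge
      (hqle p hpq _ (List.getElem?_eq_getElem hps))
  refine ⟨by simpa using hrs.1, fun i a d ha hd => ?_⟩
  by_cases hiq : i = q
  · subst hiq
    rw [List.getElem?_set_self hq, Option.some.injEq] at hd
    exact hd ▸ lt_of_getElem?_set_of_le hp hxb hle hqp ha
  · rw [List.getElem?_set_ne (Ne.symm hiq)] at hd
    by_cases hip : i = p
    · subst hip
      rw [List.getElem?_set_self hp, Option.some.injEq] at ha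
      exact ha ▸ hxb.trans (hrs.2 i b d hpb hd)
    · rw [List.getElem?_set_ne (Ne.symm hip)] at ha
      exact hrs.2 i a d ha hd

/-- The bumped letter `b` lands in the next row at a column not to the right of the
column where it was bumped from; this keeps the columns strictly increasing. -/
theorem ColumnLT.rowInsert_of_eq_some {r s r' : List α} {x b : α} (hrs : ColumnLT r s)
    (h : rowInsert r x = (r', some b)) : ColumnLT r' (rowInsert s b).1 := by
  rcases hs : rowInsert s b with ⟨s', _ | c⟩
  · exact hrs.rowInsert_of_eq_some_of_eq_none h hs
  · exact hrs.rowInsert_of_eq_some_of_eq_some h hs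

theorem head?_insertT (rs : List (List α)) (b : α) :
    (insertT rs b).head? = some (rowInsert (rs.headD []) b).1 := by
  cases rs with
  | nil => rfl
  | cons s rs => rcases h : rowInsert s b with ⟨s', _ | c⟩ <;> simp [insertT, h]

theorem isTableau_insertT {T : List (List α)} (hT : IsTableau T) (x : α) :
    IsTableau (insertT T x) := by
  induction T generalizing x with
  | nil => exact ⟨by simp [insertT], by simp [insertT]⟩
  | cons r rs ih =>
    obtain ⟨hrows, hcol⟩ := hT
    rw [List.isChain_cons] at hcol
    have hr' : (rowInsert r x).1 ≠ [] ∧ (rowInsert r x).1.Pairwise (· ≤ ·) :=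
      ⟨rowInsert_fst_ne_nil r x, pairwise_rowInsert (hrows r (by simp)).2 x⟩
    have hrs : IsTableau rs := ⟨fun s hs => hrows s (by simp [hs]), hcol.2⟩
    rcases h : rowInsert r x with ⟨r', _ | b⟩ <;> rw [h] at hr' <;> simp only [insertT, h]
    · exact ⟨List.forall_mem_cons.2 ⟨hr', fun s hs => hrows s (by simp [hs])⟩,
        List.isChain_cons.2 ⟨fun s hs => (hcol.1 s hs).rowInsert_of_eq_none h, hcol.2⟩⟩
    · obtain ⟨hrows', hcol'⟩ := ih hrs b
      refine ⟨List.forall_mem_cons.2 ⟨hr', hrows'⟩, List.isChain_cons.2 ⟨?_, hcol'⟩⟩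
      rw [head?_insertT]
      rintro s' ⟨⟩
      exact (ColumnLT.headD hcol.1).rowInsert_of_eq_some h

theorem isTableau_foldl_insertT {T : List (List α)} (hT : IsTableau T) (u : List α) :
    IsTableau (u.foldl insertT T) := by
  induction u generalizing T with
  | nil => exact hT
  | cons a u ih => exact ih (isTableau_insertT hT a)

theorem isTableau_RS (w : List α) : IsTableau (RS w) :=
  isTableau_foldl_insertT ⟨by simp, by simp⟩ w

theorem IsTableau.pairwise_part {T : List (List α)} (hT : IsTableau T) :
    (part T).Pairwise (· ≥ ·) := by
  rw [← List.isChain_iff_pairwise, part, List.isChain_map]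
  exact hT.2.imp fun _ _ h => h.1

theorem IsTableau.zero_notMem_part {T : List (List α)} (hT : IsTableau T) : 0 ∉ part T := by
  rw [part, List.mem_map]
  rintro ⟨r, hr, hlen⟩
  exact (hT.1 r hr).1 (List.length_eq_zero_iff.1 hlen)

end Tableaux

section ReverseInsertion

variable [LinearOrder α]

/-- Undo an insertion whose new box ends row `j`; `d` is a junk value, returned only when `j`
is out of range. -/
def revInsertT (d : α) : List (List α) → ℕ → List (List α) × α
  | [], _ => ([], d)
  | r :: rs, 0 => (if r.length ≤ 1 then rs else r.dropLast :: rs, r.getLastD d)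
  | r :: rs, j + 1 =>
    let p := revInsertT d rs j
    let q := rowUninsert r p.2
    (q.1 :: p.1, q.2)

theorem revInsertT_insertTWithRow (d : α) {T : List (List α)} (hT : IsTableau T) (x : α) :
    revInsertT d (insertTWithRow T x).1 (insertTWithRow T x).2 = (T, x) := by
  induction T generalizing x with
  | nil => rfl
  | cons r rs ih =>
    obtain ⟨hrne, hr⟩ := hT.1 r (by simp)
    have hrs : IsTableau rs := ⟨fun s hs => hT.1 s (by simp [hs]), hT.2.tail⟩
    rcases hp : rowInsert r x with ⟨r', _ | y⟩
    · obtain ⟨rfl, -⟩ := rowInsert_eq_none hp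
      simp [insertTWithRow, hp, revInsertT, hrne]
    · rw [insertTWithRow_cons_of_eq_some hp]
      simp only [revInsertT, ih hrs, rowUninsert_rowInsert hr hp]

theorem eq_of_insertTWithRow_eq {T S : List (List α)} {x y : α} (hT : IsTableau T)
    (hS : IsTableau S) (h : insertTWithRow T x = insertTWithRow S y) : T = S ∧ x = y := by
  have hx := revInsertT_insertTWithRow x hT x
  rw [h, revInsertT_insertTWithRow x hS y, Prod.mk.injEq] at hx
  exact ⟨hx.1.symm, hx.2.symm⟩

/-- The row bumping lemma. -/
theorem insertTWithRow_row_le {T : List (List α)} (hT : ∀ r ∈ T, r.Pairwise (· ≤ ·)) {x y : α}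
    (hxy : x ≤ y) : (insertTWithRow (insertTWithRow T x).1 y).2 ≤ (insertTWithRow T x).2 := by
  induction T generalizing x y with
  | nil =>
    have : rowInsert [x] y = ([x, y], none) := rowInsert_of_forall_le (by simpa using hxy)
    simp [insertTWithRow, this]
  | cons r rs ih =>
    rcases hp : rowInsert r x with ⟨r', _ | b⟩
    · obtain ⟨rfl, hall⟩ := rowInsert_eq_none hp
      have : rowInsert (r ++ [x]) y = (r ++ [x] ++ [y], none) :=
        rowInsert_of_forall_le fun u hu => by
          rcases List.mem_append.1 hu with hu | hu
          · exact (hall u hu).trans hxy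
          · simp only [List.mem_singleton] at hu
            exact hu ▸ hxy
      simp [insertTWithRow, hp, this]
    · rw [insertTWithRow_cons_of_eq_some hp]
      rcases hq : rowInsert r' y with ⟨r'', _ | c⟩
      · simp [insertTWithRow, hq]
      · rw [insertTWithRow_cons_of_eq_some hq]
        have := ih (fun s hs => hT s (by simp [hs]))
          (le_of_rowInsert_rowInsert (hT r (by simp)) hxy hp hq)
        omega

end ReverseInsertion

section Words

variable [LinearOrder α]

def insertWordWithRows : List (List α) → List α → List (List α) × List ℕ
  | T, [] => (T, [])
  | T, a :: u =>
    let p := insertTWithRow T a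
    let q := insertWordWithRows p.1 u
    (q.1, p.2 :: q.2)

theorem length_insertWordWithRows_snd (T : List (List α)) (u : List α) :
    (insertWordWithRows T u).2.length = u.length := by
  induction u generalizing T with
  | nil => rfl
  | cons a u ih => simp [insertWordWithRows, ih]

theorem insertWordWithRows_snd_append_singleton (T : List (List α)) (u : List α) (a : α) :
    (insertWordWithRows T (u ++ [a])).2 =
      (insertWordWithRows T u).2 ++ [(insertTWithRow (u.foldl insertT T) a).2] := by
  induction u generalizing T with
  | nil => simp [insertWordWithRows, insertTWithRow_fst]
  | cons b u ih => simp [insertWordWithRows, ih, insertTWithRow_fst]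

theorem pairwise_insertWordWithRows_snd {T : List (List α)} (hT : IsTableau T) {u : List α}
    (hu : u.Pairwise (· ≤ ·)) : (insertWordWithRows T u).2.Pairwise (· ≥ ·) := by
  rw [← List.isChain_iff_pairwise]
  induction u generalizing T with
  | nil => simp [insertWordWithRows]
  | cons a u ih =>
    rw [List.pairwise_cons] at hu
    have hTa : IsTableau (insertTWithRow T a).1 := by
      rw [insertTWithRow_fst]
      exact isTableau_insertT hT a
    refine List.isChain_cons.2 ⟨?_, ih hTa hu.2⟩
    cases u with
    | nil => simp [insertWordWithRows]
    | cons b u =>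
      rintro j ⟨⟩
      exact insertTWithRow_row_le (fun r hr => (hT.1 r hr).2) (hu.1 b (by simp))

end Words

section Shapes

theorem sum_take_succ_getD (s : List ℕ) (k : ℕ) :
    (s.take (k + 1)).sum = (s.take k).sum + s.getD k 0 := by
  by_cases hk : k < s.length
  · rw [List.sum_take_succ s k hk, List.getD_eq_getElem _ _ hk]
  · rw [List.take_of_length_le (by omega), List.take_of_length_le (by omega),
      List.getD_eq_default _ _ (by omega)]
    rfl

theorem getD_le_getD_of_pairwise {s : List ℕ} (hs : s.Pairwise (· ≥ ·)) {k j : ℕ} (hkj : k ≤ j) :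
    s.getD j 0 ≤ s.getD k 0 := by
  by_cases hj : j < s.length
  · rcases hkj.lt_or_eq with hlt | rfl
    · rw [List.getD_eq_getElem _ _ hj, List.getD_eq_getElem _ _ (hlt.trans hj)]
      exact List.pairwise_iff_getElem.1 hs k j (hlt.trans hj) hj hlt
    · rfl
  · rw [List.getD_eq_default _ _ (by omega)]
    exact Nat.zero_le _

theorem eq_of_getD_eq {s t : List ℕ} (hs : 0 ∉ s) (ht : 0 ∉ t)
    (h : ∀ k, s.getD k 0 = t.getD k 0) : s = t := by
  induction s generalizing t with
  | nil =>
    cases t with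
    | nil => rfl
    | cons b t => exact (ht (List.mem_cons.2 (Or.inl (by simpa using h 0)))).elim
  | cons a s ih =>
    cases t with
    | nil => exact (hs (List.mem_cons.2 (Or.inl (by simpa using (h 0).symm)))).elim
    | cons b t =>
      have hab : a = b := by simpa using h 0
      rw [hab, ih (fun h0 => hs (List.mem_cons_of_mem _ h0))
        (fun h0 => ht (List.mem_cons_of_mem _ h0)) fun k => by simpa using h (k + 1)]

theorem getD_addBox {s : List ℕ} {j : ℕ} (h : j ≤ s.length) (i : ℕ) :
    (addBox s j).getD i 0 = s.getD i 0 + if i = j then 1 else 0 := by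
  unfold addBox
  simp only [List.getD_eq_getElem?_getD]
  rcases h.lt_or_eq with hlt | rfl
  · rw [if_pos hlt]
    by_cases hij : i = j
    · subst hij
      simp [List.getElem?_set_self hlt, List.getElem?_eq_getElem hlt]
    · simp [List.getElem?_set_ne (Ne.symm hij), hij]
  · rw [if_neg (lt_irrefl _)]
    rcases lt_trichotomy i s.length with hi | rfl | hi
    · simp [List.getElem?_append_left hi, hi.ne]
    · simp
    · simp [List.getElem?_eq_none (le_of_lt hi), hi.ne',
        List.getElem?_eq_none (show (s ++ [1]).length ≤ i by
          simp only [List.length_append, List.length_singleton]; omega)]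

theorem sum_take_addBox {s : List ℕ} {j : ℕ} (h : j ≤ s.length) (k : ℕ) :
    ((addBox s j).take k).sum = (s.take k).sum + if j < k then 1 else 0 := by
  induction k with
  | zero => simp
  | succ k ih =>
    rw [sum_take_succ_getD, sum_take_succ_getD, ih, getD_addBox h]
    split_ifs <;> omega

theorem sum_addBox {s : List ℕ} {j : ℕ} (h : j ≤ s.length) : (addBox s j).sum = s.sum + 1 := by
  have hlen : (addBox s j).length ≤ s.length + 1 := by
    unfold addBox
    split <;> simp
  have := sum_take_addBox h (s.length + 1)
  rwa [List.take_of_length_le hlen, List.take_of_length_le (by omega), if_pos (by omega)] at this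

def ValidBoxRows : List ℕ → List ℕ → Prop
  | μ, [] => μ.Pairwise (· ≥ ·)
  | μ, j :: js => j ≤ μ.length ∧ μ.Pairwise (· ≥ ·) ∧ ValidBoxRows (addBox μ j) js

theorem validBoxRows_append {μ js ks : List ℕ} :
    ValidBoxRows μ (js ++ ks) ↔ ValidBoxRows μ js ∧ ValidBoxRows (js.foldl addBox μ) ks := by
  induction js generalizing μ with
  | nil =>
    cases ks with
    | nil => simp [ValidBoxRows]
    | cons k ks => exact ⟨fun h => ⟨h.2.1, h⟩, fun h => h.2⟩
  | cons j js ih =>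
    simp only [List.cons_append, ValidBoxRows, List.foldl_cons, ih]
    tauto

theorem getD_foldl_addBox {μ js : List ℕ} (h : ValidBoxRows μ js) (i : ℕ) :
    (js.foldl addBox μ).getD i 0 = μ.getD i 0 + js.count i := by
  induction js generalizing μ with
  | nil => simp
  | cons j js ih =>
    rw [List.foldl_cons, ih h.2.2, getD_addBox h.1, List.count_cons]
    simp only [beq_iff_eq]
    split_ifs <;> omega

theorem sum_take_foldl_addBox {μ js : List ℕ} (h : ValidBoxRows μ js) (k : ℕ) :
    ((js.foldl addBox μ).take k).sum = (μ.take k).sum + js.countP (· < k) := by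
  induction js generalizing μ with
  | nil => simp
  | cons j js ih =>
    rw [List.foldl_cons, ih h.2.2, sum_take_addBox h.1, List.countP_cons]
    simp only [decide_eq_true_eq]
    split_ifs <;> omega

theorem sum_foldl_addBox {μ js : List ℕ} (h : ValidBoxRows μ js) :
    (js.foldl addBox μ).sum = μ.sum + js.length := by
  induction js generalizing μ with
  | nil => simp
  | cons j js ih =>
    rw [List.foldl_cons, ih h.2.2, sum_addBox h.1, List.length_cons]
    omega

/-- If the rows `js` weakly decrease, the `c`-th of them that is `≥ k` lands in a row of
length at least `c`, which by the partition property bounds row `k` from below. -/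
theorem countP_le_getD_foldl_addBox {μ js : List ℕ} (hjs : js.Pairwise (· ≥ ·))
    (h : ValidBoxRows μ js) (k : ℕ) : js.countP (k ≤ ·) ≤ (js.foldl addBox μ).getD k 0 := by
  induction js using List.reverseRecOn generalizing k with
  | nil => simp
  | append_singleton js j ih =>
    rw [List.pairwise_append] at hjs
    have hj_le : ∀ i ∈ js, j ≤ i := fun i hi => hjs.2.2 i hi j (by simp)
    obtain ⟨h₁, hj, -, hν⟩ := validBoxRows_append.1 h
    rw [List.foldl_append, List.foldl_cons, List.foldl_nil, List.countP_append]
    have hgetD := getD_addBox hj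
    by_cases hkj : k ≤ j
    · have hall : ∀ k' ≤ j, js.countP (k' ≤ ·) = js.length := fun k' hk' =>
        List.countP_eq_length.2 fun i hi => by simpa using hk'.trans (hj_le i hi)
      have hIH := ih hjs.1 h₁ j
      have hmono := getD_le_getD_of_pairwise hν hkj
      rw [hall k hkj, List.countP_singleton, if_pos (by simpa using hkj), hgetD]
      rw [hall j le_rfl] at hIH
      rw [hgetD, hgetD, if_pos rfl] at hmono
      split_ifs at hmono ⊢ <;> omega
    · have := ih hjs.1 h₁ k
      rw [List.countP_singleton, if_neg (by simpa using hkj), hgetD]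
      omega

theorem countP_lt_add_countP_le (js : List ℕ) (k : ℕ) :
    js.countP (· < k) + js.countP (k ≤ ·) = js.length := by
  rw [List.length_eq_countP_add_countP (· < k)]
  congr 1
  exact List.countP_congr fun j _ => by simp

theorem sum_take_orderedInsert {σ : List ℕ} (hσ : σ.Pairwise (· ≥ ·)) (x k : ℕ) :
    ((σ.orderedInsert (· ≥ ·) x).take (k + 1)).sum =
      max ((σ.take (k + 1)).sum) ((σ.take k).sum + x) := by
  induction σ generalizing k with
  | nil => simp
  | cons a s ih =>
    by_cases hxa : x ≥ a
    · rw [List.orderedInsert_cons, if_pos hxa, List.take_succ_cons, List.sum_cons,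
        sum_take_succ_getD (a :: s) k]
      have : (a :: s).getD k 0 ≤ x := (getD_le_getD_of_pairwise hσ k.zero_le).trans hxa
      omega
    · rw [List.orderedInsert_cons, if_neg hxa]
      cases k with
      | zero =>
        simp only [List.take_succ_cons, List.take_zero, List.sum_cons, List.sum_nil]
        omega
      | succ k =>
        simp only [List.take_succ_cons, List.sum_cons, ih (List.pairwise_cons.1 hσ).2 k]
        omega

theorem getD_succ_orderedInsert_le {σ : List ℕ} (hσ : σ.Pairwise (· ≥ ·)) (x k : ℕ) :
    (σ.orderedInsert (· ≥ ·) x).getD (k + 1) 0 ≤ σ.getD k 0 := by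
  induction σ generalizing k with
  | nil => simp
  | cons a s ih =>
    rw [List.pairwise_cons] at hσ
    by_cases hxa : x ≥ a
    · simp [hxa]
    · rw [List.orderedInsert_cons, if_neg hxa]
      cases k with
      | zero =>
        have hle : ∀ z ∈ s.orderedInsert (· ≥ ·) x, z ≤ a := fun z hz => by
          rcases (List.mem_orderedInsert _).1 hz with rfl | hz
          · omega
          · exact hσ.1 z hz
        cases h : s.orderedInsert (· ≥ ·) x with
        | nil => simp
        | cons z l => simpa using hle z (by simp [h])
      | succ k => simpa using ih hσ.2 k

theorem insertionSort_append_singleton (l : List ℕ) (x : ℕ) :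
    (l ++ [x]).insertionSort (· ≥ ·) = (l.insertionSort (· ≥ ·)).orderedInsert (· ≥ ·) x :=
  List.Perm.eq_of_pairwise' (List.pairwise_insertionSort _ _)
    ((List.pairwise_insertionSort _ _).orderedInsert _ _)
    ((List.perm_insertionSort _ _).trans <| (List.perm_append_singleton x l).trans <|
      (((List.perm_insertionSort _ l).symm.cons x).trans (List.perm_orderedInsert _ _ _).symm))

theorem exists_sum_take_eq_and_lt {σ μ : List ℕ} (hσ0 : 0 ∉ σ) (hμ0 : 0 ∉ μ)
    (hle : ∀ k, (σ.take k).sum ≤ (μ.take k).sum) (hne : σ ≠ μ) :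
    ∃ m, (σ.take m).sum = (μ.take m).sum ∧ (σ.take (m + 1)).sum < (μ.take (m + 1)).sum := by
  by_contra! h
  have heq : ∀ k, (σ.take k).sum = (μ.take k).sum := by
    intro k
    induction k with
    | zero => simp
    | succ k ih => exact le_antisymm (hle _) (h k ih)
  refine hne (eq_of_getD_eq hσ0 hμ0 fun k => ?_)
  have := sum_take_succ_getD σ k
  have := sum_take_succ_getD μ k
  have := heq k
  have := heq (k + 1)
  omega

theorem domLE_orderedInsert_foldl_addBox {σ μ js : List ℕ} (hσ : σ.Pairwise (· ≥ ·))
    (hdom : DomLE σ μ) (hjs : js.Pairwise (· ≥ ·)) (h : ValidBoxRows μ js) :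
    DomLE (σ.orderedInsert (· ≥ ·) js.length) (js.foldl addBox μ) := by
  refine ⟨?_, fun k => ?_⟩
  · rw [sum_foldl_addBox h, ← hdom.1, (List.perm_orderedInsert _ _ _).sum_eq, List.sum_cons]
    omega
  · cases k with
    | zero => simp
    | succ k =>
      rw [sum_take_orderedInsert hσ, max_le_iff]
      have := sum_take_succ_getD (js.foldl addBox μ) k
      have := sum_take_foldl_addBox h k
      have := sum_take_foldl_addBox h (k + 1)
      have := countP_le_getD_foldl_addBox hjs h k
      have := countP_lt_add_countP_le js k
      have := hdom.2 k
      have := hdom.2 (k + 1)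
      omega

/-- At the first `k = m + 1` at which `σ` falls strictly behind `μ`, equality would force
row `m + 1` of the new shape to have at least `μ_m > σ_m` boxes, while inserting into `σ`
shifts `σ_m` at most to position `m + 1`. -/
theorem orderedInsert_ne_foldl_addBox {σ μ js : List ℕ} (hσ : σ.Pairwise (· ≥ ·)) (hσ0 : 0 ∉ σ)
    (hμ0 : 0 ∉ μ) (hdom : DomLE σ μ) (hjs : js.Pairwise (· ≥ ·)) (h : ValidBoxRows μ js)
    (hne : σ ≠ μ) : σ.orderedInsert (· ≥ ·) js.length ≠ js.foldl addBox μ := by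
  intro heq
  obtain ⟨m, hm_eq, hlt⟩ := exists_sum_take_eq_and_lt hσ0 hμ0 hdom.2 hne
  have hsum := congrArg (fun l => (l.take (m + 1)).sum) heq
  simp only [sum_take_orderedInsert hσ, sum_take_foldl_addBox h] at hsum
  have hshift := getD_succ_orderedInsert_le hσ js.length m
  rw [heq] at hshift
  have := countP_le_getD_foldl_addBox hjs h (m + 1)
  have := countP_lt_add_countP_le js (m + 1)
  have := sum_take_succ_getD σ m
  have := sum_take_succ_getD μ m
  omega

end Shapes

theorem part_append_singleton (Q : List (List α)) (u : List α) :
    part (Q ++ [u]) = part Q ++ [u.length] := by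
  simp [part]

section Arrays

variable [LinearOrder α]

theorem validBoxRows_insertWordWithRows {T : List (List α)} (hT : IsTableau T) (u : List α) :
    ValidBoxRows (part T) (insertWordWithRows T u).2 ∧
      part (u.foldl insertT T) = (insertWordWithRows T u).2.foldl addBox (part T) := by
  induction u generalizing T with
  | nil => exact ⟨hT.pairwise_part, rfl⟩
  | cons a u ih =>
    have hTa : IsTableau (insertTWithRow T a).1 := by
      rw [insertTWithRow_fst]
      exact isTableau_insertT hT a
    obtain ⟨ih₁, ih₂⟩ := ih hTa
    obtain ⟨hshape, hrow⟩ := part_insertTWithRow T a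
    simp only [insertWordWithRows, List.foldl_cons, ValidBoxRows]
    refine ⟨⟨by simpa [part] using hrow, hT.pairwise_part, ?_⟩, ?_⟩
    · rw [← hshape]
      exact ih₁
    · rw [← insertTWithRow_fst T a, ih₂, hshape]

/-- The last box created by a weakly increasing word lies in the first row whose length
changed. -/
theorem growth_of_foldl_insertT_append_singleton {T : List (List α)} (hT : IsTableau T)
    {u : List α} {a : α} (hu : (u ++ [a]).Pairwise (· ≤ ·)) :
    (∀ i < (insertTWithRow (u.foldl insertT T) a).2,
      (part ((u ++ [a]).foldl insertT T)).getD i 0 = (part T).getD i 0) ∧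
    (part T).getD (insertTWithRow (u.foldl insertT T) a).2 0 <
      (part ((u ++ [a]).foldl insertT T)).getD (insertTWithRow (u.foldl insertT T) a).2 0 := by
  set j := (insertTWithRow (u.foldl insertT T) a).2
  have hjs : (insertWordWithRows T (u ++ [a])).2 = (insertWordWithRows T u).2 ++ [j] :=
    insertWordWithRows_snd_append_singleton T u a
  have hj_le : ∀ i ∈ (insertWordWithRows T (u ++ [a])).2, j ≤ i := by
    have hdec := pairwise_insertWordWithRows_snd hT hu
    rw [hjs, List.pairwise_append] at hdec
    intro i hi
    rw [hjs, List.mem_append, List.mem_singleton] at hi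
    rcases hi with hi | rfl
    · exact hdec.2.2 i hi j (by simp)
    · exact le_rfl
  obtain ⟨hval, hpart⟩ := validBoxRows_insertWordWithRows hT (u ++ [a])
  rw [hpart, getD_foldl_addBox hval]
  refine ⟨fun i hi => ?_, ?_⟩
  · rw [getD_foldl_addBox hval, List.count_eq_zero.2 fun h => absurd (hj_le i h) (by omega)]
    rfl
  · have : 0 < (insertWordWithRows T (u ++ [a])).2.count j :=
      List.count_pos_iff.2 (by simp [hjs])
    omega

theorem eq_of_foldl_insertT_eq {T S : List (List α)} (hT : IsTableau T) (hS : IsTableau S)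
    (hTS : part T = part S) {u v : List α} (hu : u.Pairwise (· ≤ ·)) (hv : v.Pairwise (· ≤ ·))
    (huv : u.length = v.length) (h : u.foldl insertT T = v.foldl insertT S) : T = S ∧ u = v := by
  induction u using List.reverseRecOn generalizing v with
  | nil =>
    obtain rfl := List.length_eq_zero_iff.1 huv.symm
    exact ⟨h, rfl⟩
  | append_singleton u a ih =>
    obtain ⟨v, c, rfl⟩ : ∃ v' c, v = v' ++ [c] := by
      rcases List.eq_nil_or_concat v with rfl | ⟨v', c, rfl⟩
      · simp at huv
      · exact ⟨v', c, by simp⟩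
    obtain ⟨hTlo, hThi⟩ := growth_of_foldl_insertT_append_singleton hT hu
    obtain ⟨hSlo, hShi⟩ := growth_of_foldl_insertT_append_singleton hS hv
    rw [h, hTS] at hTlo hThi
    have hrow :
        (insertTWithRow (u.foldl insertT T) a).2 = (insertTWithRow (v.foldl insertT S) c).2 := by
      by_contra hne
      rcases Nat.lt_or_gt_of_ne hne with hlt | hlt
      · have := hSlo _ hlt
        omega
      · have := hTlo _ hlt
        omega
    have hlast : insertTWithRow (u.foldl insertT T) a = insertTWithRow (v.foldl insertT S) c := by
      refine Prod.ext ?_ hrow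
      simpa [insertTWithRow_fst] using h
    obtain ⟨hTS', rfl⟩ := eq_of_insertTWithRow_eq (isTableau_foldl_insertT hT u)
      (isTableau_foldl_insertT hS v) hlast
    obtain ⟨rfl, rfl⟩ := ih (hu.sublist (List.sublist_append_left _ _))
      (hv.sublist (List.sublist_append_left _ _)) (by simpa using huv) hTS'
    exact ⟨rfl, rfl⟩

theorem RS_append (w u : List α) : RS (w ++ u) = u.foldl insertT (RS w) :=
  List.foldl_append

theorem exists_part_RS_flatten_append_singleton (Q : List (List α)) {u : List α}
    (hu : u.Pairwise (· ≤ ·)) :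
    ∃ js : List ℕ, js.Pairwise (· ≥ ·) ∧ js.length = u.length ∧
      ValidBoxRows (part (RS Q.flatten)) js ∧
      part (RS (Q ++ [u]).flatten) = js.foldl addBox (part (RS Q.flatten)) := by
  have hT := isTableau_RS Q.flatten
  obtain ⟨hval, hpart⟩ := validBoxRows_insertWordWithRows hT u
  refine ⟨_, pairwise_insertWordWithRows_snd hT hu, length_insertWordWithRows_snd _ _, hval, ?_⟩
  rw [List.flatten_append, List.flatten_singleton, RS_append, hpart]

theorem domLE_insertionSort_part_RS_flatten {Q : List (List α)}
    (hQ : ∀ r ∈ Q, r.Pairwise (· ≤ ·)) :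
    DomLE ((part Q).insertionSort (· ≥ ·)) (part (RS Q.flatten)) := by
  induction Q using List.reverseRecOn with
  | nil => exact ⟨rfl, fun _ => le_rfl⟩
  | append_singleton Q u ih =>
    obtain ⟨js, hjs, hlen, hval, hpart⟩ :=
      exists_part_RS_flatten_append_singleton Q (hQ u (by simp))
    rw [hpart, part_append_singleton, insertionSort_append_singleton, ← hlen]
    exact domLE_orderedInsert_foldl_addBox (List.pairwise_insertionSort _ _)
      (ih fun r hr => hQ r (by simp [hr])) hjs hval

theorem part_RS_flatten_eq_of_append_singleton {Q : List (List α)} {u : List α}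
    (hQ : ∀ r ∈ Q, r.Pairwise (· ≤ ·)) (hQ0 : 0 ∉ part Q) (hu : u.Pairwise (· ≤ ·))
    (h : part (RS (Q ++ [u]).flatten) = (part (Q ++ [u])).insertionSort (· ≥ ·)) :
    part (RS Q.flatten) = (part Q).insertionSort (· ≥ ·) := by
  by_contra hne
  obtain ⟨js, hjs, hlen, hval, hpart⟩ := exists_part_RS_flatten_append_singleton Q hu
  rw [hpart, part_append_singleton, insertionSort_append_singleton, ← hlen] at h
  exact orderedInsert_ne_foldl_addBox (List.pairwise_insertionSort _ _)
    (fun h0 => hQ0 ((List.perm_insertionSort _ _).mem_iff.1 h0))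
    (isTableau_RS _).zero_notMem_part (domLE_insertionSort_part_RS_flatten hQ) hjs hval
    (Ne.symm hne) h.symm

theorem eq_of_RS_flatten_eq_of_part_eq {Q R : List (List α)} (hQ : ∀ r ∈ Q, r.Pairwise (· ≤ ·))
    (hR : ∀ r ∈ R, r.Pairwise (· ≤ ·)) (hQ0 : 0 ∉ part Q) (hQR : part Q = part R)
    (hshape : part (RS Q.flatten) = (part Q).insertionSort (· ≥ ·))
    (h : RS Q.flatten = RS R.flatten) : Q = R := by
  induction Q using List.reverseRecOn generalizing R with
  | nil => exact (List.map_eq_nil_iff.1 hQR.symm).symm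
  | append_singleton Q u ih =>
    obtain ⟨R, v, rfl⟩ : ∃ R' v, R = R' ++ [v] := by
      rcases List.eq_nil_or_concat R with rfl | ⟨R', v, rfl⟩
      · simp [part] at hQR
      · exact ⟨R', v, by simp⟩
    have hQ' : ∀ r ∈ Q, r.Pairwise (· ≤ ·) := fun r hr => hQ r (by simp [hr])
    have hR' : ∀ r ∈ R, r.Pairwise (· ≤ ·) := fun r hr => hR r (by simp [hr])
    have hQ0' : 0 ∉ part Q := fun h0 => hQ0 (by simp [part_append_singleton, h0])
    obtain ⟨hQR', huv⟩ :=
      List.append_inj' (by simpa only [part_append_singleton] using hQR) (by simp)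
    have hshapeQ := part_RS_flatten_eq_of_append_singleton hQ' hQ0' (hQ u (by simp)) hshape
    have hshapeR := part_RS_flatten_eq_of_append_singleton hR' (hQR' ▸ hQ0') (hR v (by simp))
      (by rw [← h, ← hQR]; exact hshape)
    simp only [List.flatten_append, List.flatten_singleton, RS_append] at h
    obtain ⟨hRS, rfl⟩ := eq_of_foldl_insertT_eq (isTableau_RS _) (isTableau_RS _)
      (by rw [hshapeQ, hshapeR, hQR']) (hQ u (by simp)) (hR v (by simp)) (by simpa using huv) h
    rw [ih hQ' hR' hQ0' hQR' hshapeQ hRS]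

theorem eq_of_RS_flatten_eq {Q R : List (List α)} (hQ : ∀ r ∈ Q, r.Pairwise (· ≤ ·))
    (hR : ∀ r ∈ R, r.Pairwise (· ≤ ·)) (hQR : part Q = part R)
    (hshape : (part (RS Q.flatten)).Perm (part Q)) (h : RS Q.flatten = RS R.flatten) : Q = R :=
  have hT := isTableau_RS Q.flatten
  eq_of_RS_flatten_eq_of_part_eq hQ hR (fun h0 => hT.zero_notMem_part (hshape.mem_iff.2 h0)) hQR
    (List.Perm.eq_of_pairwise' hT.pairwise_part (List.pairwise_insertionSort _ _)
      (hshape.trans (List.perm_insertionSort _ _).symm)) h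

end Arrays

theorem stmt1_general (r : ℕ) (p : Fin r → ℕ) (p0 : ℕ) (A B : List (List ℚ))
    (hA : MemSTabLe (List.ofFn p ++ [p0] ++ (List.ofFn p).reverse) A)
    (hB : MemSTabLe (List.ofFn p ++ [p0] ++ (List.ofFn p).reverse) B)
    (hpart : part (RS A.flatten) =
      (((p0 ::ₘ ((↑(List.ofFn p) : Multiset ℕ) + ↑(List.ofFn p))) :
          Multiset ℕ).sort (· ≤ ·)).reverse) :
    RS A.flatten = RS B.flatten ↔ A = B := by
  have hrows : ∀ {C : List (List ℚ)}, MemSTabLe (List.ofFn p ++ [p0] ++ (List.ofFn p).reverse) C →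
      ∀ row ∈ C, row.Pairwise (· ≤ ·) :=
    fun hC row hrow => List.isChain_iff_pairwise.1 (hC.2.2.1 row hrow)
  refine ⟨fun h => eq_of_RS_flatten_eq (hrows hA) (hrows hB) (hA.1.trans hB.1.symm) ?_ h,
    fun h => h ▸ rfl⟩
  rw [hpart, show part A = _ from hA.1]
  refine (List.reverse_perm _).trans (Multiset.coe_eq_coe.1 ?_)
  simp only [Multiset.sort_eq, Multiset.coe_add, Multiset.cons_coe, Multiset.coe_eq_coe,
    List.append_assoc, List.cons_append, List.nil_append]
  exact (((List.reverse_perm _).symm.append_left _).cons p0).trans List.perm_middle.symm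

/-- Let `P` be the symmetric pyramid associated to positive integers
`p_1 ≤ … ≤ p_r` and `p0`, and let `pt` be the partition obtained by sorting the
multiset `(p_1, p_1, …, p_r, p_r, p0)`.  If `A, B ∈ sTab^≤(P)` and
`part(RS(A)) = pt`, then `RS(A) = RS(B)` if and only if `A = B`. -/
theorem stmt1 (r : ℕ) (p : Fin r → ℕ) (hppos : ∀ i, 0 < p i) (hpmono : Monotone p)
    (p0 : ℕ) (hp0 : 0 < p0) (A B : List (List ℚ))
    (hA : MemSTabLe (List.ofFn p ++ [p0] ++ (List.ofFn p).reverse) A)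
    (hB : MemSTabLe (List.ofFn p ++ [p0] ++ (List.ofFn p).reverse) B)
    (hpart : part (RS A.flatten) =
      (((p0 ::ₘ ((↑(List.ofFn p) : Multiset ℕ) + ↑(List.ofFn p))) :
          Multiset ℕ).sort (· ≤ ·)).reverse) :
    RS A.flatten = RS B.flatten ↔ A = B :=
  stmt1_general r p p0 A B hA hB hpart

end BG
end

section
/- Let a, b_1, …, b_m be integers with a > 0, b_1 < b_2 < … < b_m < 0 and −a < b_m. Then (a, b_1, …, b_m) ∼τ (b_1, …, b_m, −a). -/
/-!
The letter `a` exceeds every `bᵢ`, so the Knuth moves `x a y ↔ a x y` carry it rightwards past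
`b₁, …, b_{m-1}`. There `a` and `b_m` have opposite signs, so (R3) swaps them, and since
`|b_m| < a`, (R2) then negates the final letter `a`.
-/

namespace BG

variable {α : Type*}

local infix:50 " ∼τ " => TauEquiv

theorem KnuthEquiv.tauEquiv {u v : List ℤ} (h : KnuthEquiv u v) : u ∼τ v :=
  Relation.EqvGen.mono (fun _ _ => TauStep.knuth _ _) _ _ h

theorem TauStep.tauEquiv {u v : List ℤ} (h : TauStep u v) : u ∼τ v :=
  Relation.EqvGen.rel _ _ h

instance : Trans TauEquiv TauEquiv TauEquiv :=
  ⟨fun h₁ h₂ => Relation.EqvGen.trans _ _ _ h₁ h₂⟩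

/-- Each move `x z y ↔ z x y` needs the letter `y` following `x`, so `z` stops in front of the
last letter `d`. -/
theorem knuthEquiv_cons_append {z d : ℤ} {s : List ℤ} (hs : (s ++ [d]).Pairwise (· ≤ ·))
    (hz : ∀ x ∈ s ++ [d], x < z) (u v : List ℤ) :
    KnuthEquiv (u ++ z :: (s ++ d :: v)) (u ++ s ++ z :: d :: v) := by
  unfold KnuthEquiv
  induction s generalizing u with
  | nil => simpa using Relation.EqvGen.refl _
  | cons x s ih =>
    obtain ⟨hx, hs⟩ := List.pairwise_cons.1 hs
    have hstep : KnuthStep (u ++ x :: z :: (s ++ d :: v)) (u ++ z :: x :: (s ++ d :: v)) := by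
      cases s with
      | nil => exact .move1 u v x d z (hx d (by simp)) (hz d (by simp))
      | cons y s => exact .move1 u (s ++ d :: v) x y z (hx y (by simp)) (hz y (by simp))
    have hrest := ih hs (fun y hy => hz y (List.mem_cons_of_mem x hy)) (u ++ [x])
    simp only [List.append_assoc, List.singleton_append] at hrest
    simpa using Relation.EqvGen.trans _ _ _ (Relation.EqvGen.symm _ _ (.rel _ _ hstep)) hrest

theorem tauEquiv_cons_append_neg {a d : ℤ} {s : List ℤ} (hs : (s ++ [d]).Pairwise (· ≤ ·))
    (hd : d < 0) (had : -a < d) :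
    a :: (s ++ [d]) ∼τ s ++ [d, -a] := by
  have hlt : ∀ x ∈ s ++ [d], x < a := fun x hx => by
    obtain hx | hx := List.mem_append.1 hx
    · linarith [(List.pairwise_append.1 hs).2.2 x hx d (List.mem_singleton_self d)]
    · rw [List.mem_singleton.1 hx]
      omega
  calc a :: (s ++ [d]) ∼τ s ++ [a, d] := by
        simpa using (knuthEquiv_cons_append hs hlt [] []).tauEquiv
    _ ∼τ s ++ [d, a] := (TauStep.swapLast s a d (mul_neg_of_pos_of_neg (by omega) hd)).tauEquiv
    _ ∼τ s ++ [d, -a] :=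
        (TauStep.negLast s d a (by rw [abs_of_neg hd, abs_of_pos (by omega)]; omega)).tauEquiv

/-- Let `a, b_1, …, b_m` be integers with `a > 0`, `b_1 < … < b_m < 0` and
`-a < b_m`.  Then `(a, b_1, …, b_m) ∼τ (b_1, …, b_m, -a)`. -/
theorem stmt3 (m : ℕ) (hm : 0 < m) (a : ℤ)
    (b : Fin m → ℤ) (hb : StrictMono b)
    (hbneg : b ⟨m - 1, by omega⟩ < 0)
    (hlast : -a < b ⟨m - 1, by omega⟩) :
    TauEquiv (a :: List.ofFn b) (List.ofFn b ++ [-a]) := by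
  obtain ⟨n, rfl⟩ : ∃ n, m = n + 1 := ⟨m - 1, by omega⟩
  have hsorted : (List.ofFn b).Pairwise (· ≤ ·) := List.pairwise_ofFn.2 fun _ _ hij => (hb hij).le
  rw [List.ofFn_succ', List.concat_eq_append] at hsorted ⊢
  simpa using tauEquiv_cons_append_neg hsorted hbneg hlast

end BG
end

section
/- Let p < q be positive integers and let P be the symmetric pyramid with three rows of lengths 2p+1, 2q+1, 2p+1. If A ∈ sTab^≤(P) and A^{L−} is row equivalent to column strict, then A is justified row equivalent to column strict. -/
/-!
Take a column-strict rearrangement `[T, M, Bo]` of `A^{L-}` and split `M = M₁ ++ M₂` and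
`Bo = Bo' ++ [c]` with `|M₁| = |Bo'| = p`. The rows
`T ++ (-Bo') ++ [-c]`, `M₁ ++ (-M₁) ++ 0 :: (M₂ ++ (-M₂))` and `Bo' ++ (-T) ++ [c]` are
rearrangements of the rows of `A`, and they are column strict: the first `p` columns are those of
`[T, M₁, Bo']`, the next `p` are their negatives read bottom to top, column `2p` is `(-c, 0, c)`,
which decreases because `c` lies below the first entry of `M₂`, itself `≤ 0`, and the remaining
columns only have a middle entry.
-/

namespace BG

variable {α : Type*}

lemma filterMap_getElem?_zipWith_append {X Y : List (List α)} {n : ℕ}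
    (hX : ∀ x ∈ X, x.length = n) (hXY : X.length = Y.length) (j : ℕ) :
    (List.zipWith (· ++ ·) X Y).filterMap (·[j]?) =
      if j < n then X.filterMap (·[j]?) else Y.filterMap (·[j - n]?) := by
  induction X generalizing Y with
  | nil => cases Y <;> simp_all
  | cons x X ih =>
    cases Y with
    | nil => simp at hXY
    | cons y Y =>
      simp only [List.mem_cons, forall_eq_or_imp] at hX
      simp only [List.length_cons, Nat.add_right_cancel_iff] at hXY
      rw [List.zipWith_cons_cons, List.filterMap_cons, ih hX.2 hXY, List.getElem?_append, hX.1]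
      split_ifs <;> rfl

lemma columnStrict_zipWith_append_iff [LT α] {X Y : List (List α)} {n : ℕ}
    (hX : ∀ x ∈ X, x.length = n) (hXY : X.length = Y.length) :
    ColumnStrict (List.zipWith (· ++ ·) X Y) ↔ ColumnStrict X ∧ ColumnStrict Y := by
  simp only [ColumnStrict, filterMap_getElem?_zipWith_append hX hXY]
  constructor
  · intro h
    refine ⟨fun j => ?_, fun j => by simpa using h (j + n)⟩
    by_cases hj : j < n
    · simpa [hj] using h j
    · have : X.filterMap (·[j]?) = [] :=
        List.filterMap_eq_nil_iff.2 fun x hx => List.getElem?_eq_none (by rw [hX x hx]; omega)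
      rw [this]
      exact List.IsChain.nil
  · rintro ⟨hXcs, hYcs⟩ j
    split_ifs
    · exact hXcs j
    · exact hYcs (j - n)

lemma ColumnStrict.reverse_map_neg [AddGroup α] [LT α] [AddLeftStrictMono α]
    [AddRightStrictMono α] {X : List (List α)} (h : ColumnStrict X) :
    ColumnStrict (X.reverse.map (List.map (-·))) := by
  intro j
  have hcol : (X.reverse.map (List.map (-·))).filterMap (·[j]?) =
      ((X.filterMap (·[j]?)).map (-·)).reverse := by
    simp [List.filterMap_map, List.filterMap_reverse, List.map_filterMap]
  rw [hcol]
  show List.IsChain _ _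
  rw [List.isChain_reverse, List.isChain_map]
  exact (h j).imp fun _ _ => neg_lt_neg_iff.2

lemma columnStrict_singleton_cons_singleton [LT α] {x y z : α} (l : List α)
    (hxy : y < x) (hyz : z < y) : ColumnStrict [[x], y :: l, [z]] := by
  rintro (_ | j) <;> show List.IsChain _ _
  · simp [List.isChain_cons_cons, hxy, hyz]
  · cases h : l[j]? <;> simp [h]

lemma columnStrict_symmetrize [AddGroup α] [LT α] [AddLeftStrictMono α]
    [AddRightStrictMono α] {T M Bo : List α} (hM : M.length = T.length)
    (hBo : Bo.length = T.length) (h : ColumnStrict [T, M, Bo]) (M₂ : List α) {c : α}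
    (hc : c < 0) :
    ColumnStrict [T ++ (Bo.map (-·) ++ [-c]), M ++ (M.map (-·) ++ 0 :: (M₂ ++ M₂.map (-·))),
      Bo ++ (T.map (-·) ++ [c])] := by
  have hcentre := columnStrict_singleton_cons_singleton (M₂ ++ M₂.map (-·)) (neg_pos.2 hc) hc
  have hright := (columnStrict_zipWith_append_iff (X := [Bo.map (-·), M.map (-·), T.map (-·)])
    (n := T.length) (by simp [hM, hBo]) (by rfl)).2 ⟨h.reverse_map_neg, hcentre⟩
  simpa using (columnStrict_zipWith_append_iff (X := [T, M, Bo]) (n := T.length)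
    (by simp [hM, hBo]) (by rfl)).2 ⟨h, hright⟩

lemma negRow_perm_map [Neg α] (l : List α) : (negRow l).Perm (l.map (-·)) :=
  (List.reverse_perm _).map _

lemma negRow_append [Neg α] (l₁ l₂ : List α) : negRow (l₁ ++ l₂) = negRow l₂ ++ negRow l₁ := by
  simp [negRow]

lemma negRow_negRow [InvolutiveNeg α] (l : List α) : negRow (negRow l) = l := by
  simp [negRow, List.map_reverse]

lemma forall₂_perm_symmetrize [InvolutiveNeg α] [Zero α] {lo hi mid T M M₂ Bo : List α} {c : α}
    (hT : lo.Perm T) (hM : mid.Perm (M ++ M₂)) (hBo : hi.Perm (Bo ++ [c])) :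
    List.Forall₂ List.Perm [lo ++ negRow hi, mid ++ [0] ++ negRow mid, negRow (lo ++ negRow hi)]
      [T ++ (Bo.map (-·) ++ [-c]), M ++ (M.map (-·) ++ 0 :: (M₂ ++ M₂.map (-·))),
        Bo ++ (T.map (-·) ++ [c])] := by
  refine .cons ?top (.cons ?middle (.cons ?bottom .nil))
  case top => simpa using hT.append ((negRow_perm_map hi).trans (hBo.map _))
  case middle =>
    refine ((hM.append_right _).append ((negRow_perm_map mid).trans (hM.map _))).trans ?_
    rw [← Multiset.coe_eq_coe]
    simp only [List.map_append, ← Multiset.coe_add, ← Multiset.cons_coe,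
      ← Multiset.singleton_add, Multiset.coe_nil]
    abel
  case bottom =>
    rw [negRow_append, negRow_negRow]
    refine (hBo.append ((negRow_perm_map lo).trans (hT.map _))).trans ?_
    simpa using (List.perm_append_comm (l₁ := [c])).append_left Bo

lemma ofFn_eq_append_negRow [InvolutiveNeg α] {p : ℕ} (a : Fin (2 * p + 1) → α) :
    List.ofFn a = List.ofFn (fun i : Fin p => a ⟨i, by omega⟩) ++
      negRow (List.ofFn fun i : Fin (p + 1) => -a ⟨2 * p - i, by omega⟩) := by
  refine List.ext_getElem (by simp [negRow]; omega) fun n h₁ _ => ?_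
  rw [List.length_ofFn] at h₁
  simp only [negRow, List.getElem_ofFn, List.getElem_append, List.getElem_reverse,
    List.getElem_map, List.length_ofFn, neg_neg]
  split_ifs with hn
  · rfl
  · congr 1
    ext
    simp only
    omega

/-- Let `p < q` be positive integers and let `P` be the symmetric pyramid with
three rows of lengths `2p+1, 2q+1, 2p+1`.  An element `A ∈ sTab^≤(P)` is given
by its top row `a_1 ≤ … ≤ a_{2p+1}` and the first half `b_1 ≤ … ≤ b_q ≤ 0` of
its middle row `(b_1, …, b_q, 0, -b_q, …, -b_1)`; the bottom row is
`(-a_{2p+1}, …, -a_1)` by skew-symmetry.  If `A^{L-}` (rows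
`(a_1, …, a_p)`, `(b_1, …, b_q)`, `(-a_{2p+1}, …, -a_{p+1})`) is row
equivalent to column strict, then `A` is justified row equivalent to column
strict. -/
theorem stmt7 (p q : ℕ) (hpq : p < q)
    (a : Fin (2 * p + 1) → ℤ) (b : Fin q → ℤ)
    (hb : Monotone b) (hb0 : b ⟨q - 1, by omega⟩ ≤ 0)
    (hLminus : RowEquivColumnStrict
      [List.ofFn (fun i : Fin p => a ⟨i, by omega⟩),
       List.ofFn b,
       List.ofFn (fun i : Fin (p + 1) => -a ⟨2 * p - i, by omega⟩)]) :
    RowEquivColumnStrict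
      [List.ofFn a,
       List.ofFn b ++ [0] ++ negRow (List.ofFn b),
       negRow (List.ofFn a)] := by
  obtain ⟨_, _ | @⟨_, T, _, _, hT, _ | @⟨_, M, _, _, hM, _ | @⟨_, Bo, _, _, hBo, ⟨⟩⟩⟩⟩, hcs⟩ :=
    hLminus
  have hTlen : T.length = p := by simpa using hT.length_eq.symm
  have hMlen : p < M.length := by simpa [← hM.length_eq]
  obtain ⟨Bo', c, rfl⟩ : ∃ Bo' c, Bo = Bo' ++ [c] :=
    Bo.eq_nil_or_concat'.resolve_left (by rintro rfl; simpa using hBo.length_eq)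
  obtain ⟨M₁, m, M₂, rfl, hM₁⟩ : ∃ M₁ m M₂, M = M₁ ++ m :: M₂ ∧ M₁.length = p :=
    ⟨M.take p, M[p], M.drop (p + 1), by rw [List.getElem_cons_drop, List.take_append_drop],
      List.length_take_of_le hMlen.le⟩
  have hBo'len : Bo'.length = p := by simpa using hBo.length_eq.symm
  have hm : m ≤ 0 := by
    obtain ⟨i, rfl⟩ := List.mem_ofFn.1 (hM.mem_iff.2 (List.mem_append_right M₁ List.mem_cons_self))
    exact (hb (Fin.le_def.2 (Nat.le_sub_one_of_lt i.2))).trans hb0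
  rw [show [T, M₁ ++ m :: M₂, Bo' ++ [c]] = List.zipWith (· ++ ·) [T, M₁, Bo'] [[], m :: M₂, [c]]
    by simp, columnStrict_zipWith_append_iff (n := p) (by simp [*]) (by rfl)] at hcs
  have hcm : c < m := (List.isChain_pair (R := (· > ·))).1 (hcs.2 0)
  rw [ofFn_eq_append_negRow a]
  exact ⟨_, forall₂_perm_symmetrize hT hM hBo,
    columnStrict_symmetrize (by omega) (by omega) hcs.1 (m :: M₂) (hcm.trans_le hm)⟩

end BG
end

section
/- Let l > m be even positive integers. Then content((m, l, l)) = {m/2, l/2, (l+2)/2}, and the partitions of 2l+m whose content equals content((m, l, l)) are exactly (m, l, l), (m, l−1, l+1) and (m+1, l−1, l) (parts listed in increasing order). -/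
/-!
A partition with `r` parts has a content of `r` or `r + 1` elements, so a partition with the
content of `(m, l, l)` has two or three parts. Two parts `a ≥ b` give the content
`{0, ⌊(b+1)/2⌋, ⌊(a+2)/2⌋}`, which cannot contain `0` since `m > 0`. Three parts `a ≥ b ≥ c`
give `{⌊c/2⌋, ⌊(b+1)/2⌋, ⌊(a+2)/2⌋}`, already listed in increasing order, so comparing it with
the sorted `{m/2, l/2, l/2 + 1}` entry by entry yields three floor equations which, together
with `a + b + c = 2l + m`, have exactly the three stated solutions.
-/

namespace BG

variable {α : Type*}

theorem _root_.Multiset.eq_of_sorted_triple_eq [PartialOrder α] {x y z u v w : α}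
    (hxy : x ≤ y) (hyz : y ≤ z) (huv : u ≤ v) (hvw : v ≤ w)
    (h : ({x, y, z} : Multiset α) = {u, v, w}) : x = u ∧ y = v ∧ z = w := by
  have hsorted : ∀ {a b c : α}, a ≤ b → b ≤ c → [a, b, c].Pairwise (· ≤ ·) := fun hab hbc => by
    simp [hab, hbc, hab.trans hbc]
  have hlist : [x, y, z] = [u, v, w] :=
    List.Perm.eq_of_pairwise' (hsorted hxy hyz) (hsorted huv hvw) (Multiset.coe_eq_coe.mp h)
  simpa using hlist

theorem contentP_pair (a b : ℕ) : contentP [a, b] = {0, (b + 1) / 2, (a + 2) / 2} := by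
  simp [contentP, List.range_succ]; rfl

theorem contentP_triple (a b c : ℕ) : contentP [a, b, c] = {c / 2, (b + 1) / 2, (a + 2) / 2} := by
  simp [contentP, List.range_succ]; rfl

theorem contentP_triple_of_eq {a b c x y z : ℕ} (hx : c / 2 = x) (hy : (b + 1) / 2 = y)
    (hz : (a + 2) / 2 = z) : contentP [a, b, c] = {x, y, z} := by
  rw [contentP_triple, hx, hy, hz]

theorem card_contentP (q : List ℕ) :
    (contentP q).card = if q.length % 2 = 1 then q.length else q.length + 1 := by
  simp only [contentP, List.length_reverse, Multiset.coe_card, List.length_map, List.length_range]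
  split <;> simp

theorem length_eq_two_or_three_of_card_contentP {q : List ℕ} (h : (contentP q).card = 3) :
    q.length = 2 ∨ q.length = 3 := by
  rw [card_contentP] at h
  split at h <;> omega

/-- Let `l > m` be even positive integers.  Then
`content((m, l, l)) = {m/2, l/2, (l+2)/2}`, and the partitions of `2l + m`
(weakly decreasing lists of positive naturals) whose content equals
`content((m, l, l))` are exactly `(m, l, l)`, `(m, l-1, l+1)` and
`(m+1, l-1, l)` (parts listed here in increasing order, i.e. the decreasing
lists `[l, l, m]`, `[l+1, l-1, m]` and `[l, l-1, m+1]`). -/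
theorem stmt11 (l m : ℕ) (hm : 0 < m) (hml : m < l) (hl2 : 2 ∣ l) (hm2 : 2 ∣ m) :
    contentP [l, l, m] = ({m / 2, l / 2, (l + 2) / 2} : Multiset ℕ) ∧
    ∀ q : List ℕ, List.Chain' (· ≥ ·) q → (∀ x ∈ q, 0 < x) → q.sum = 2 * l + m →
      (contentP q = contentP [l, l, m] ↔
        q = [l, l, m] ∨ q = [l + 1, l - 1, m] ∨ q = [l, l - 1, m + 1]) := by
  have hcontent : contentP [l, l, m] = ({m / 2, l / 2, (l + 2) / 2} : Multiset ℕ) :=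
    contentP_triple_of_eq rfl (by omega) rfl
  refine ⟨hcontent, fun q hchain _ hsum => ?_⟩
  rw [hcontent]
  constructor
  · intro hq
    rcases length_eq_two_or_three_of_card_contentP (by rw [hq]; rfl) with hlen | hlen
    · obtain ⟨a, b, rfl⟩ := List.length_eq_two.mp hlen
      have h0 : 0 ∈ ({m / 2, l / 2, (l + 2) / 2} : Multiset ℕ) := by
        rw [← hq, contentP_pair]; simp
      simp only [Multiset.insert_eq_cons, Multiset.mem_cons, Multiset.mem_singleton] at h0
      omega
    · obtain ⟨a, b, c, rfl⟩ := List.length_eq_three.mp hlen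
      simp only [List.Chain', List.isChain_cons_cons, List.isChain_singleton, and_true,
        ge_iff_le] at hchain
      simp only [List.sum_cons, List.sum_nil, add_zero] at hsum
      rw [contentP_triple] at hq
      obtain ⟨hc, hb, ha⟩ :=
        Multiset.eq_of_sorted_triple_eq (by omega) (by omega) (by omega) (by omega) hq
      simp only [List.cons.injEq, and_true]
      omega
  · rintro (rfl | rfl | rfl) <;> exact contentP_triple_of_eq (by omega) (by omega) (by omega)

end BG
end

section
/- Let p = (p_1 ≤ p_2 ≤ … ≤ p_m) be a partition with m odd (p_1 may be 0), and choose nonnegative integers r_1, …, r_k and s_1, …, s_l so that the multiset {p_1, p_2+1, …, p_m+m−1} equals the multiset {2r_1, …, 2r_k, 2s_1+1, …, 2s_l+1}. If p has domino shape and an even number of boxes, then k = l + 1; if p has domino shape and an odd number of boxes, then k + 1 = l. -/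
/-!
Colour the cell `(i, j)` by `(-1) ^ (i + j)`. Every domino covers one cell of each colour, so
the colour balance of a domino tableau is `0` for an even and `1` for an odd number of boxes.
On the other hand a row of a Young diagram contributes `0` to the balance if it has even length
and `±1` according to the parity of its index if it has odd length; reading the rows off the
parts `p_i` (zero parts being empty rows) turns twice the balance into
`1 - ∑ i, (-1) ^ (p_i + i) = 1 - (k - l)`, since `m` is odd.
-/

namespace BG

def IsYoungSet (S : Finset (ℕ × ℕ)) : Prop :=
  (∀ p ∈ S, 1 ≤ p.1 ∧ 1 ≤ p.2) ∧
  ∀ p ∈ S, ∀ i j : ℕ, 1 ≤ i → 1 ≤ j → i ≤ p.1 → j ≤ p.2 → (i, j) ∈ S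

def IsDominoSet (s : Finset (ℕ × ℕ)) : Prop :=
  ∃ r c : ℕ, 1 ≤ r ∧ 1 ≤ c ∧ (s = {(r, c), (r, c + 1)} ∨ s = {(r, c), (r + 1, c)})

structure DominoTableau (n : ℕ) where
  D : Fin n → Finset (ℕ × ℕ)
  domino : ∀ i, IsDominoSet (D i)
  disj : ∀ i j, i ≠ j → Disjoint (D i) (D j)
  young : ∀ k : ℕ,
    IsYoungSet ((Finset.univ.filter (fun i : Fin n => (i : ℕ) < k)).biUnion D)

def DominoTableau.cells {n : ℕ} (R : DominoTableau n) : Finset (ℕ × ℕ) :=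
  Finset.univ.biUnion R.D

structure OddDominoTableau (n : ℕ) where
  D : Fin n → Finset (ℕ × ℕ)
  domino : ∀ i, IsDominoSet (D i)
  disj : ∀ i j, i ≠ j → Disjoint (D i) (D j)
  zero_box : ∀ i, ((1 : ℕ), (1 : ℕ)) ∉ D i
  young : ∀ k : ℕ,
    IsYoungSet (insert ((1 : ℕ), (1 : ℕ))
      ((Finset.univ.filter (fun i : Fin n => (i : ℕ) < k)).biUnion D))

def OddDominoTableau.cells {n : ℕ} (R : OddDominoTableau n) : Finset (ℕ × ℕ) :=
  insert ((1 : ℕ), (1 : ℕ)) (Finset.univ.biUnion R.D)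

def rowLen (S : Finset (ℕ × ℕ)) (i : ℕ) : ℕ := (S.filter (fun p => p.1 = i)).card

def numRows (S : Finset (ℕ × ℕ)) : ℕ := S.sup Prod.fst

def partOf (S : Finset (ℕ × ℕ)) : List ℕ :=
  (List.range (numRows S)).map (fun i => rowLen S (i + 1))

open Finset

def colorBalance (S : Finset (ℕ × ℕ)) : ℤ := ∑ x ∈ S, (-1) ^ (x.1 + x.2)

lemma colorBalance_eq_zero_of_isDominoSet {s : Finset (ℕ × ℕ)} (h : IsDominoSet s) :
    colorBalance s = 0 := by
  obtain ⟨r, c, -, -, rfl | rfl⟩ := h <;> rw [colorBalance, sum_pair (by simp)] <;> ring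

lemma colorBalance_biUnion_of_isDominoSet {ι : Type*} (t : Finset ι) {D : ι → Finset (ℕ × ℕ)}
    (hD : ∀ i ∈ t, IsDominoSet (D i)) (hdisj : (t : Set ι).PairwiseDisjoint D) :
    colorBalance (t.biUnion D) = 0 := by
  rw [colorBalance, sum_biUnion hdisj]
  exact sum_eq_zero fun i hi => colorBalance_eq_zero_of_isDominoSet (hD i hi)

lemma DominoTableau.colorBalance_cells {n : ℕ} (R : DominoTableau n) :
    colorBalance R.cells = 0 :=
  colorBalance_biUnion_of_isDominoSet _ (fun i _ => R.domino i) fun i _ j _ => R.disj i j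

lemma OddDominoTableau.colorBalance_cells {n : ℕ} (R : OddDominoTableau n) :
    colorBalance R.cells = 1 := by
  have h11 : ((1 : ℕ), (1 : ℕ)) ∉ univ.biUnion R.D := by simpa using R.zero_box
  rw [OddDominoTableau.cells, colorBalance, sum_insert h11, ← colorBalance,
    colorBalance_biUnion_of_isDominoSet _ (fun i _ => R.domino i) fun i _ j _ => R.disj i j]
  norm_num

lemma DominoTableau.isYoungSet_cells {n : ℕ} (R : DominoTableau n) : IsYoungSet R.cells := by
  simpa [DominoTableau.cells] using R.young n

lemma OddDominoTableau.isYoungSet_cells {n : ℕ} (R : OddDominoTableau n) :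
    IsYoungSet R.cells := by
  simpa [OddDominoTableau.cells] using R.young n

lemma IsYoungSet.filter_fst_eq {S : Finset (ℕ × ℕ)} (hS : IsYoungSet S) (r : ℕ) :
    S.filter (·.1 = r) = (Icc 1 (rowLen S r)).image (r, ·) := by
  have hinj : Function.Injective (fun j : ℕ => (r, j)) := Prod.mk_right_injective r
  have hrow : ∀ j, (r, j) ∈ S → (Icc 1 j).image (r, ·) ⊆ S.filter (·.1 = r) := by
    intro j hj x hx
    obtain ⟨i, hi, rfl⟩ := mem_image.mp hx
    rw [mem_Icc] at hi
    exact mem_filter.mpr ⟨hS.2 _ hj r i (hS.1 _ hj).1 hi.1 le_rfl hi.2, rfl⟩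
  refine eq_of_subset_of_card_le ?_ ?_
  · intro x hx
    obtain ⟨hxS, rfl⟩ := mem_filter.mp hx
    have hj := card_le_card (hrow x.2 hxS)
    rw [card_image_of_injective _ hinj, Nat.card_Icc] at hj
    exact mem_image.mpr ⟨x.2, mem_Icc.mpr ⟨(hS.1 _ hxS).2, by rw [rowLen]; omega⟩, rfl⟩
  · rw [card_image_of_injective _ hinj, Nat.card_Icc, rowLen]
    omega

lemma two_mul_sum_Icc_neg_one_pow (L : ℕ) :
    2 * ∑ j ∈ Icc 1 L, (-1 : ℤ) ^ j = (-1) ^ L - 1 := by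
  induction L with
  | zero => simp
  | succ L ih => rw [sum_Icc_succ_top (by omega), mul_add, ih]; ring

lemma IsYoungSet.two_mul_colorBalance {S : Finset (ℕ × ℕ)} (hS : IsYoungSet S) {m : ℕ}
    (hm : numRows S ≤ m) :
    2 * colorBalance S =
      ∑ r ∈ range m, ((-1) ^ (r + 1 + rowLen S (r + 1)) - (-1) ^ (r + 1)) := by
  have hrows : ∀ x ∈ S, x.1 ∈ Ico 1 (m + 1) := fun x hx =>
    mem_Ico.mpr ⟨(hS.1 x hx).1, Nat.lt_succ_of_le ((le_sup hx).trans hm)⟩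
  rw [colorBalance, ← sum_fiberwise_of_maps_to hrows, sum_Ico_eq_sum_range, Nat.add_sub_cancel,
    mul_sum]
  refine sum_congr rfl fun r _ => ?_
  rw [add_comm 1 r, hS.filter_fst_eq, sum_image fun _ _ _ _ h => (Prod.mk.inj h).2]
  simp only [pow_add _ (r + 1)]
  rw [← mul_sum, mul_left_comm, two_mul_sum_Icc_neg_one_pow]
  ring

lemma getD_partOf (S : Finset (ℕ × ℕ)) (r : ℕ) : (partOf S).getD r 0 = rowLen S (r + 1) := by
  by_cases hr : r < numRows S
  · simp [partOf, List.getD_eq_getElem?_getD, hr]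
  · rw [List.getD_eq_default _ _ (by simpa [partOf] using hr), eq_comm, rowLen, card_eq_zero,
      filter_eq_empty_iff]
    intro x hx hx1
    have := le_sup (f := Prod.fst) hx
    rw [numRows] at hr
    omega

lemma getD_reverse_filter_ne_zero {p : List ℕ} (hp : p.Pairwise (· ≤ ·)) (r : ℕ) :
    (p.filter (· ≠ 0)).reverse.getD r 0 = p.reverse.getD r 0 := by
  induction p with
  | nil => rfl
  | cons a p ih =>
    obtain ⟨ha, hp'⟩ := List.pairwise_cons.mp hp
    by_cases h0 : a = 0
    · -- A leading zero of `p` is a trailing zero of `p.reverse`, invisible to `getD _ 0`.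
      subst h0
      rw [List.filter_cons_of_neg (by simp), ih hp', List.reverse_cons]
      rcases lt_or_ge r p.length with hr | hr
      · rw [List.getD_append _ _ _ _ (by simpa using hr)]
      · rw [List.getD_append_right _ _ _ _ (by simpa using hr),
          List.getD_eq_default _ _ (by simpa using hr)]
        cases r - p.reverse.length <;> rfl
    · rw [List.filter_eq_self.mpr fun b hb => ?_]
      rcases List.mem_cons.mp hb with rfl | hb
      · simpa using h0
      · have := ha b hb
        simp only [ne_eq, decide_eq_true_eq]
        omega

lemma length_filter_odd_sub_length_filter_even (f : ℕ → ℕ) (m : ℕ) :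
    (((List.range m).filter (fun i => f i % 2 = 1)).length : ℤ)
      - ((List.range m).filter (fun i => f i % 2 = 0)).length = -∑ i ∈ range m, (-1) ^ f i := by
  change (((range m).filter _).card : ℤ) - ((range m).filter _).card = _
  rw [card_filter, card_filter]
  push_cast
  rw [← sum_sub_distrib, ← sum_neg_distrib]
  refine sum_congr rfl fun i _ => ?_
  rcases Nat.even_or_odd (f i) with h | h
  · simp [h.neg_one_pow, Nat.even_iff.mp h]
  · simp [h.neg_one_pow, Nat.odd_iff.mp h]

lemma two_mul_colorBalance_eq {p : List ℕ} (hp : p.Pairwise (· ≤ ·)) (hodd : Odd p.length)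
    {S : Finset (ℕ × ℕ)} (hS : IsYoungSet S) (hpart : partOf S = (p.filter (· ≠ 0)).reverse) :
    2 * colorBalance S = 1 - ∑ i ∈ range p.length, (-1) ^ (p.getD i 0 + i) := by
  set m := p.length
  have hrows : numRows S ≤ m := by
    have h := congrArg List.length hpart
    rw [partOf, List.length_map, List.length_range, List.length_reverse] at h
    exact h ▸ List.length_filter_le _ p
  have hrowLen : ∀ r < m, rowLen S (r + 1) = p.getD (m - 1 - r) 0 := fun r hr => by
    rw [← getD_partOf, hpart, getD_reverse_filter_ne_zero hp, List.getD_reverse r hr]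
  have hrows_sum : ∑ r ∈ range m, (-1 : ℤ) ^ (r + 1 + rowLen S (r + 1)) =
      -∑ i ∈ range m, (-1) ^ (p.getD i 0 + i) := by
    rw [← sum_range_reflect (fun i => (-1 : ℤ) ^ (p.getD i 0 + i)) m, ← sum_neg_distrib]
    refine sum_congr rfl fun r hr => ?_
    rw [mem_range] at hr
    rw [hrowLen r hr, neg_one_pow_congr (n := p.getD (m - 1 - r) 0 + (m - 1 - r) + 1), pow_succ,
      mul_neg_one]
    -- `m - 1` is even, so `m - 1 - r` and `r` have the same parity.
    have := Nat.odd_iff.mp hodd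
    simp only [Nat.even_iff]
    omega
  have hsigns : ∑ r ∈ range m, (-1 : ℤ) ^ (r + 1) = -1 := by
    simp [pow_succ, neg_one_geom_sum, Nat.not_even_iff_odd.mpr hodd]
  rw [hS.two_mul_colorBalance hrows, sum_sub_distrib, hrows_sum, hsigns]
  ring

/-- Let `p = (p_1 ≤ p_2 ≤ … ≤ p_m)` be a partition with `m` odd (`p_1` may be
`0`), and let `k` (resp. `l`) be the number of even (resp. odd) members of the
multiset `{p_1, p_2 + 1, …, p_m + m - 1}`; equivalently `k` and `l` count the
`2rᵢ` and the `2sⱼ + 1` in the decomposition of that multiset.  If `p` has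
domino shape and an even number of boxes, then `k = l + 1`; if `p` has domino
shape and an odd number of boxes, then `k + 1 = l`. -/
theorem stmt13 (p : List ℕ) (hps : List.Chain' (· ≤ ·) p)
    (hodd : p.length % 2 = 1) (k l : ℕ)
    (hk : k = ((List.range p.length).filter
      (fun i => (p.getD i 0 + i) % 2 = 0)).length)
    (hl : l = ((List.range p.length).filter
      (fun i => (p.getD i 0 + i) % 2 = 1)).length) :
    ((∃ (n : ℕ) (R : DominoTableau n),
        partOf R.cells = (p.filter (fun x => x ≠ 0)).reverse) → k = l + 1) ∧
    ((∃ (n : ℕ) (R : OddDominoTableau n),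
        partOf R.cells = (p.filter (fun x => x ≠ 0)).reverse) → k + 1 = l) := by
  have hp : p.Pairwise (· ≤ ·) := List.isChain_iff_pairwise.mp hps
  have hm : Odd p.length := Nat.odd_iff.mpr hodd
  have hlk : (l : ℤ) - k = -∑ i ∈ range p.length, (-1) ^ (p.getD i 0 + i) := by
    subst hk hl
    exact length_filter_odd_sub_length_filter_even (fun i => p.getD i 0 + i) p.length
  refine ⟨fun ⟨n, R, hR⟩ => ?_, fun ⟨n, R, hR⟩ => ?_⟩
  · have h := two_mul_colorBalance_eq hp hm R.isYoungSet_cells hR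
    rw [R.colorBalance_cells] at h
    omega
  · have h := two_mul_colorBalance_eq hp hm R.isYoungSet_cells hR
    rw [R.colorBalance_cells] at h
    omega

end BG
end
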